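/- arXiv:1604.08289 — 7 statements merged into one kernel-verified Lean document; each statement's English description precedes it below -/
import Mathlib

section
/- Let N be a positive integer, let c_1 ≥ c_2 ≥ ... ≥ c_N be real numbers, and let P be an N×N Hermitian complex matrix with spectral decomposition P = U·diag(μ_1,...,μ_N)·U*, where U is unitary and μ_1 ≥ μ_2 ≥ ... ≥ μ_N are the eigenvalues of P in descending order. Then for every unitary W ∈ M_N(ℂ), ‖P − U·diag(c_1,...,c_N)·U*‖_F ≤ ‖P − W·diag(c_1,...,c_N)·W*‖_F. -/
open Matrix Kronecker Finset

/-- Frobenius norm of a square complex matrix. -/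
noncomputable def frobNorm {n : Type*} [Fintype n] (X : Matrix n n ℂ) : ℝ :=
  Real.sqrt ((Xᴴ * X).trace.re)

lemma ds_bound {N : ℕ} {μ c : Fin N → ℝ} (hμ : Antitone μ) (hc : Antitone c)
    {S : Matrix (Fin N) (Fin N) ℝ} (hS : S ∈ doublyStochastic ℝ (Fin N)) :
    ∑ i, ∑ j, μ i * c j * S i j ≤ ∑ i, μ i * c i := by
  obtain ⟨w, hw0, hw1, hwS⟩ := exists_eq_sum_perm_of_mem_doublyStochastic hS
  have hmono : Monovary μ c := by
    intro i j h
    refine hμ ?_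
    by_contra hij
    exact absurd (hc (le_of_not_ge hij)) h.not_ge
  have key : ∑ i, ∑ j, μ i * c j * S i j = ∑ σ : Equiv.Perm (Fin N), w σ * ∑ i, μ i * c (σ i) := by
    rw [← hwS]
    calc ∑ i, ∑ j, μ i * c j * (∑ σ : Equiv.Perm (Fin N), w σ • σ.permMatrix ℝ) i j
        = ∑ i, ∑ j, ∑ σ : Equiv.Perm (Fin N), μ i * c j * (w σ * (if σ i = j then 1 else 0)) := by
          simp [Matrix.sum_apply, Equiv.Perm.permMatrix, PEquiv.toMatrix_apply,
            Equiv.toPEquiv_apply, Finset.mul_sum]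
      _ = ∑ σ : Equiv.Perm (Fin N), ∑ i, ∑ j, μ i * c j * (w σ * (if σ i = j then 1 else 0)) := by
          rw [show (∑ i, ∑ j, ∑ σ : Equiv.Perm (Fin N),
              μ i * c j * (w σ * (if σ i = j then 1 else 0)))
            = ∑ i, ∑ σ : Equiv.Perm (Fin N), ∑ j,
              μ i * c j * (w σ * (if σ i = j then 1 else 0)) from
            Finset.sum_congr rfl fun i _ => Finset.sum_comm]
          exact Finset.sum_comm
      _ = ∑ σ : Equiv.Perm (Fin N), w σ * ∑ i, μ i * c (σ i) := by
          refine Finset.sum_congr rfl fun σ _ => ?_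
          rw [Finset.mul_sum]
          refine Finset.sum_congr rfl fun i _ => ?_
          simp [mul_ite, Finset.sum_ite_eq, mul_comm, mul_left_comm]
  rw [key]
  calc ∑ σ : Equiv.Perm (Fin N), w σ * ∑ i, μ i * c (σ i)
      ≤ ∑ σ : Equiv.Perm (Fin N), w σ * ∑ i, μ i * c i := by
        refine Finset.sum_le_sum fun σ _ => mul_le_mul_of_nonneg_left ?_ (hw0 σ)
        exact hmono.sum_mul_comp_perm_le_sum_mul
    _ = ∑ i, μ i * c i := by rw [← Finset.sum_mul, hw1, one_mul]

lemma unitary_normSq_ds {N : ℕ} {V : Matrix (Fin N) (Fin N) ℂ}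
    (hV : V ∈ Matrix.unitaryGroup (Fin N) ℂ) :
    Matrix.of (fun i j => Complex.normSq (V i j)) ∈ doublyStochastic ℝ (Fin N) := by
  rw [mem_doublyStochastic_iff_sum]
  refine ⟨fun i j => Complex.normSq_nonneg _, ?_, ?_⟩
  · intro i
    have h : V * Vᴴ = 1 := mem_unitaryGroup_iff.mp hV
    have h2 := congrArg (fun M => (M i i).re) h
    simpa [Matrix.mul_apply, Matrix.conjTranspose_apply, Matrix.one_apply,
      Complex.mul_conj, ← Complex.ofReal_sum] using h2
  · intro j
    have h : Vᴴ * V = 1 := mem_unitaryGroup_iff'.mp hV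
    have h2 := congrArg (fun M => (M j j).re) h
    simpa [Matrix.mul_apply, Matrix.conjTranspose_apply, Matrix.one_apply,
      mul_comm, Complex.mul_conj, ← Complex.ofReal_sum] using h2

lemma trace_diag_conj {N : ℕ} (μ c : Fin N → ℝ) (V : Matrix (Fin N) (Fin N) ℂ) :
    ((Matrix.diagonal (fun i => (μ i : ℂ)) * V * Matrix.diagonal (fun i => (c i : ℂ)) * Vᴴ).trace).re
      = ∑ i, ∑ j, μ i * c j * Complex.normSq (V i j) := by
  have h : ∀ i j : Fin N,
      (((Matrix.diagonal (fun i => (μ i : ℂ)) * V * Matrix.diagonal (fun i => (c i : ℂ))) i j)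
        * (starRingEnd ℂ) (V i j)).re = μ i * c j * Complex.normSq (V i j) := by
    intro i j
    rw [Matrix.mul_diagonal, Matrix.diagonal_mul]
    rw [show (μ i : ℂ) * V i j * (c j : ℂ) * (starRingEnd ℂ) (V i j)
      = (μ i : ℂ) * (c j : ℂ) * (V i j * (starRingEnd ℂ) (V i j)) by ring, Complex.mul_conj]
    simp [← Complex.ofReal_mul]
  simp only [Matrix.trace, Matrix.diag_apply, Matrix.mul_apply, Matrix.conjTranspose_apply,
    Complex.re_sum]
  exact Finset.sum_congr rfl fun i _ => Finset.sum_congr rfl fun j _ => h i j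

/-- If `P = U diag(μ) U*` with `U` unitary and `μ` in descending order, then among all
`W diag(c) W*` with `W` unitary and `c` descending, `U diag(c) U*` is a Frobenius-norm
best approximation to `P`. -/
theorem stmt0 {N : ℕ} (hN : 0 < N) (c μ : Fin N → ℝ) (hc : Antitone c) (hμ : Antitone μ)
    (U : Matrix (Fin N) (Fin N) ℂ) (hU : U ∈ Matrix.unitaryGroup (Fin N) ℂ)
    (P : Matrix (Fin N) (Fin N) ℂ) (hP : P.IsHermitian)
    (hPU : P = U * Matrix.diagonal (fun i => (μ i : ℂ)) * Uᴴ) :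
    ∀ W : Matrix (Fin N) (Fin N) ℂ, W ∈ Matrix.unitaryGroup (Fin N) ℂ →
      frobNorm (P - U * Matrix.diagonal (fun i => (c i : ℂ)) * Uᴴ) ≤
        frobNorm (P - W * Matrix.diagonal (fun i => (c i : ℂ)) * Wᴴ) := by
  intro W hW
  set Dc : Matrix (Fin N) (Fin N) ℂ := Matrix.diagonal (fun i => (c i : ℂ)) with hDc
  set Dμ : Matrix (Fin N) (Fin N) ℂ := Matrix.diagonal (fun i => (μ i : ℂ)) with hDμ
  have hDcH : Dcᴴ = Dc := by
    simp [hDc, Matrix.diagonal_conjTranspose]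
  -- expansion of the squared Frobenius norm
  have expand : ∀ X : Matrix (Fin N) (Fin N) ℂ, X ∈ Matrix.unitaryGroup (Fin N) ℂ →
      ((P - X * Dc * Xᴴ)ᴴ * (P - X * Dc * Xᴴ)).trace.re
        = (Pᴴ * P).trace.re + (∑ i, c i ^ 2) - 2 * (P * (X * Dc * Xᴴ)).trace.re := by
    intro X hX
    have hXH : Xᴴ * X = 1 := mem_unitaryGroup_iff'.mp hX
    have hBH : (X * Dc * Xᴴ)ᴴ = X * Dc * Xᴴ := by
      simp [Matrix.conjTranspose_mul, hDcH, Matrix.mul_assoc]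
    have hBB : ((X * Dc * Xᴴ) * (X * Dc * Xᴴ)).trace = ∑ i, ((c i : ℂ)) ^ 2 := by
      have : (X * Dc * Xᴴ) * (X * Dc * Xᴴ) = X * (Dc * Dc) * Xᴴ := by
        calc (X * Dc * Xᴴ) * (X * Dc * Xᴴ) = X * Dc * (Xᴴ * X) * Dc * Xᴴ := by
              simp only [Matrix.mul_assoc]
          _ = X * (Dc * Dc) * Xᴴ := by
              rw [hXH, Matrix.mul_one]; simp only [Matrix.mul_assoc]
      rw [this, Matrix.trace_mul_comm, ← Matrix.mul_assoc, hXH, Matrix.one_mul]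
      simp [hDc, Matrix.diagonal_mul_diagonal, Matrix.trace_diagonal, sq]
    have hPB : ((X * Dc * Xᴴ) * P).trace = (P * (X * Dc * Xᴴ)).trace :=
      Matrix.trace_mul_comm _ _
    rw [Matrix.conjTranspose_sub, hP.eq, hBH, Matrix.sub_mul, Matrix.mul_sub,
      Matrix.mul_sub, Matrix.trace_sub, Matrix.trace_sub, Matrix.trace_sub, hPB, hBB]
    simp only [hP.eq, Complex.sub_re, Complex.add_re]
    have : (∑ i, ((c i : ℂ)) ^ 2).re = ∑ i, c i ^ 2 := by
      simp [← Complex.ofReal_pow, ← Complex.ofReal_sum]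
    rw [this]
    ring
  -- the cross term as a double sum
  have cross : ∀ X : Matrix (Fin N) (Fin N) ℂ,
      (P * (X * Dc * Xᴴ)).trace.re
        = ∑ i, ∑ j, μ i * c j * Complex.normSq ((Uᴴ * X) i j) := by
    intro X
    have hUUH : U * Uᴴ = 1 := mem_unitaryGroup_iff.mp hU
    have h1 : P * (X * Dc * Xᴴ) = U * (Dμ * (Uᴴ * X) * Dc * (Uᴴ * X)ᴴ) * Uᴴ := by
      rw [hPU]
      simp only [Matrix.conjTranspose_mul, Matrix.conjTranspose_conjTranspose,
        Matrix.mul_assoc, hUUH, Matrix.mul_one]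
    have hUU : Uᴴ * U = 1 := mem_unitaryGroup_iff'.mp hU
    rw [h1, Matrix.trace_mul_comm, ← Matrix.mul_assoc, hUU, Matrix.one_mul]
    exact trace_diag_conj μ c (Uᴴ * X)
  -- the cross term for X = U
  have crossU : (P * (U * Dc * Uᴴ)).trace.re = ∑ i, μ i * c i := by
    rw [cross U]
    have hUU : Uᴴ * U = 1 := mem_unitaryGroup_iff'.mp hU
    rw [hUU]
    have : ∀ i j : Fin N, Complex.normSq ((1 : Matrix (Fin N) (Fin N) ℂ) i j)
        = if i = j then 1 else 0 := by
      intro i j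
      by_cases h : i = j <;> simp [Matrix.one_apply, h]
    simp only [this]
    refine Finset.sum_congr rfl fun i _ => ?_
    simp [mul_ite, Finset.sum_ite_eq]
  -- V := Uᴴ W is unitary, so its |entries|² form a doubly stochastic matrix
  have hV : Uᴴ * W ∈ Matrix.unitaryGroup (Fin N) ℂ := by
    have h1 : Uᴴ ∈ Matrix.unitaryGroup (Fin N) ℂ := by
      have := Unitary.star_mem hU
      simpa [Matrix.star_eq_conjTranspose] using this
    exact mul_mem h1 hW
  have hds := unitary_normSq_ds hV
  have hbound : ∑ i, ∑ j, μ i * c j * Complex.normSq ((Uᴴ * W) i j) ≤ ∑ i, μ i * c i :=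
    ds_bound hμ hc hds
  -- conclude
  unfold frobNorm
  apply Real.sqrt_le_sqrt
  rw [expand U hU, expand W hW, crossU, cross W]
  have : 2 * (∑ i, ∑ j, μ i * c j * Complex.normSq ((Uᴴ * W) i j)) ≤ 2 * (∑ i, μ i * c i) := by
    linarith
  linarith
end

section
/- Let n1 ≤ n2 be positive integers, let a_1,...,a_{n1} and b_1,...,b_{n2} be strictly positive reals with Σ a_j = 1 = Σ b_l, and let k be an integer with n2 ≤ k ≤ n1 + n2 − 1. Let ω = e^{2πi/k} be a primitive k-th root of unity, and for i = 1,...,k define u_i ∈ ℂ^{n1} with entries (u_i)_j = ω^{(j−1)(i−1)}·√(a_j) and v_i ∈ ℂ^{n2} with entries (v_i)_l = ω^{(l−1)(i−1)}·√(b_l). Then ρ = (1/k)·Σ_{i=1}^k (u_i u_i*) ⊗ (v_i v_i*) is a density matrix in S(diag(a_1,...,a_{n1}), diag(b_1,...,b_{n2})) and rank(ρ) = k. -/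
open Matrix Kronecker Finset
open scoped ComplexOrder

/-- Partial trace over the first subsystem: `tr_1(ρ) = Σ_j ρ_{jj} ∈ M_{n2}`. -/
noncomputable def trace1 {n1 n2 : ℕ} (ρ : Matrix (Fin n1 × Fin n2) (Fin n1 × Fin n2) ℂ) :
    Matrix (Fin n2) (Fin n2) ℂ :=
  Matrix.of fun i j => ∑ k : Fin n1, ρ (k, i) (k, j)

/-- Partial trace over the second subsystem: `tr_2(ρ) = (tr ρ_{ij})_{ij} ∈ M_{n1}`. -/
noncomputable def trace2 {n1 n2 : ℕ} (ρ : Matrix (Fin n1 × Fin n2) (Fin n1 × Fin n2) ℂ) :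
    Matrix (Fin n1) (Fin n1) ℂ :=
  Matrix.of fun i j => ∑ k : Fin n2, ρ (i, k) (j, k)

/-- The rank-`k` construction from Algorithm 2.4: with `ω` a primitive `k`-th root of unity and
`u_i = (ω^{(j-1)(i-1)} √a_j)_j`, `v_i = (ω^{(l-1)(i-1)} √b_l)_l`, the state
`ρ = (1/k) Σ_i (u_i u_i*) ⊗ (v_i v_i*)` lies in `S(diag a, diag b)` and has rank `k`. -/
theorem stmt3 {n1 n2 k : ℕ} (hn1 : 0 < n1) (hle : n1 ≤ n2)
    (a : Fin n1 → ℝ) (b : Fin n2 → ℝ)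
    (ha : ∀ j, 0 < a j) (hb : ∀ l, 0 < b l)
    (hasum : ∑ j, a j = 1) (hbsum : ∑ l, b l = 1)
    (hk1 : n2 ≤ k) (hk2 : k ≤ n1 + n2 - 1)
    (ω : ℂ) (hω : ω = Complex.exp (2 * Real.pi * Complex.I / k))
    (u : Fin k → Fin n1 → ℂ) (v : Fin k → Fin n2 → ℂ)
    (hu : ∀ i j, u i j = ω ^ ((j : ℕ) * (i : ℕ)) * (Real.sqrt (a j) : ℂ))
    (hv : ∀ i l, v i l = ω ^ ((l : ℕ) * (i : ℕ)) * (Real.sqrt (b l) : ℂ))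
    (ρ : Matrix (Fin n1 × Fin n2) (Fin n1 × Fin n2) ℂ)
    (hρ : ρ = (k : ℂ)⁻¹ • ∑ i,
      (Matrix.vecMulVec (u i) (star (u i))) ⊗ₖ (Matrix.vecMulVec (v i) (star (v i)))) :
    ρ.PosSemidef ∧ ρ.trace = 1 ∧
      trace2 ρ = Matrix.diagonal (fun j => (a j : ℂ)) ∧
      trace1 ρ = Matrix.diagonal (fun l => (b l : ℂ)) ∧
      ρ.rank = k := by
  have hk0 : 0 < k := lt_of_lt_of_le (lt_of_lt_of_le hn1 hle) hk1
  have hkC : (k : ℂ) ≠ 0 := Nat.cast_ne_zero.mpr hk0.ne'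
  have hprim : IsPrimitiveRoot ω k := hω ▸ Complex.isPrimitiveRoot_exp k hk0.ne'
  have hωk : ω ^ k = 1 := hprim.pow_eq_one
  have hω0 : ω ≠ 0 := by
    intro h
    rw [h, zero_pow hk0.ne'] at hωk
    exact zero_ne_one hωk
  have hconj : (starRingEnd ℂ) ω = ω⁻¹ := by
    rw [hω, ← Complex.exp_conj, ← Complex.exp_neg]
    congr 1
    simp [map_div₀, Complex.conj_I, map_ofNat]
    ring
  have hstarpow : ∀ m : ℕ, star (ω ^ m) = (ω ^ m)⁻¹ := by
    intro m
    rw [show star (ω ^ m) = (starRingEnd ℂ) (ω ^ m) from rfl, map_pow, hconj, inv_pow]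
  have hstarR : ∀ x : ℝ, star ((x : ℂ)) = (x : ℂ) := fun x => by
    rw [show star ((x:ℂ)) = (starRingEnd ℂ) (x:ℂ) from rfl, Complex.conj_ofReal]
  -- geometric sum
  have geo : ∀ ζ : ℂ, ζ ^ k = 1 → ζ ≠ 1 → ∑ i : Fin k, ζ ^ (i : ℕ) = 0 := by
    intro ζ hζk hζ1
    rw [Fin.sum_univ_eq_sum_range, geom_sum_eq hζ1, hζk]
    simp
  have key : ∀ m n : ℕ, m < k → n < k →
      ∑ i : Fin k, (ω ^ m * (ω ^ n)⁻¹) ^ (i : ℕ) = if m = n then (k : ℂ) else 0 := by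
    intro m n hm hn
    by_cases h : m = n
    · subst h
      simp [mul_inv_cancel₀ (pow_ne_zero m hω0)]
    · rw [if_neg h]
      apply geo
      · rw [mul_pow, inv_pow, ← pow_mul, ← pow_mul, mul_comm m k, mul_comm n k,
          pow_mul, pow_mul, hωk, one_pow, one_pow, inv_one, mul_one]
      · intro hcon
        exact h (hprim.pow_inj hm hn ((mul_inv_eq_one₀ (pow_ne_zero n hω0)).mp hcon))
  -- entry products
  have huv : ∀ (i : Fin k) (p q : Fin n1), u i p * star (u i q) =
      (ω ^ (p : ℕ) * (ω ^ (q : ℕ))⁻¹) ^ (i : ℕ) *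
        ((Real.sqrt (a p) * Real.sqrt (a q) : ℝ) : ℂ) := by
    intro i p q
    rw [hu, hu, star_mul', hstarpow, hstarR, mul_pow, inv_pow, ← pow_mul, ← pow_mul]
    push_cast
    ring
  have hvv : ∀ (i : Fin k) (p q : Fin n2), v i p * star (v i q) =
      (ω ^ (p : ℕ) * (ω ^ (q : ℕ))⁻¹) ^ (i : ℕ) *
        ((Real.sqrt (b p) * Real.sqrt (b q) : ℝ) : ℂ) := by
    intro i p q
    rw [hv, hv, star_mul', hstarpow, hstarR, mul_pow, inv_pow, ← pow_mul, ← pow_mul]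
    push_cast
    ring
  have hua : ∀ (i : Fin k) (p : Fin n1), u i p * star (u i p) = ((a p : ℝ) : ℂ) := by
    intro i p
    rw [huv, mul_inv_cancel₀ (pow_ne_zero _ hω0), one_pow, one_mul,
      Real.mul_self_sqrt (ha p).le]
  have hvb : ∀ (i : Fin k) (p : Fin n2), v i p * star (v i p) = ((b p : ℝ) : ℂ) := by
    intro i p
    rw [hvv, mul_inv_cancel₀ (pow_ne_zero _ hω0), one_pow, one_mul,
      Real.mul_self_sqrt (hb p).le]
  have hsum_a : ∑ j, ((a j : ℝ) : ℂ) = 1 := by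
    rw [← Complex.ofReal_sum, hasum, Complex.ofReal_one]
  have hsum_b : ∑ l, ((b l : ℝ) : ℂ) = 1 := by
    rw [← Complex.ofReal_sum, hbsum, Complex.ofReal_one]
  -- entries of ρ
  have hent : ∀ p q : Fin n1 × Fin n2, ρ p q =
      (k : ℂ)⁻¹ * ∑ i : Fin k, (u i p.1 * star (u i q.1)) * (v i p.2 * star (v i q.2)) := by
    intro p q
    rw [hρ]
    simp only [Matrix.smul_apply, Matrix.sum_apply, kroneckerMap_apply, vecMulVec_apply,
      Pi.star_apply, smul_eq_mul]
  -- the factorization ρ = W * Wᴴ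
  set c : ℝ := (Real.sqrt k)⁻¹ with hc
  have hc2 : (c : ℂ) * (c : ℂ) = (k : ℂ)⁻¹ := by
    have : c * c = (k : ℝ)⁻¹ := by
      rw [hc, ← mul_inv, Real.mul_self_sqrt (Nat.cast_nonneg k)]
    rw [← Complex.ofReal_mul, this]
    push_cast
    ring
  set W : Matrix (Fin n1 × Fin n2) (Fin k) ℂ :=
    Matrix.of (fun p i => (c : ℂ) * (u i p.1 * v i p.2)) with hW
  have hWW : ρ = W * Wᴴ := by
    ext p q
    rw [hent]
    simp only [Matrix.mul_apply, Matrix.conjTranspose_apply, hW, Matrix.of_apply]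
    rw [Finset.mul_sum]
    refine Finset.sum_congr rfl fun i _ => ?_
    rw [star_mul', hstarR, star_mul', ← hc2]
    ring
  -- PosSemidef
  have hpsd : ρ.PosSemidef := hWW ▸ Matrix.posSemidef_self_mul_conjTranspose W
  -- trace
  have htr : ρ.trace = 1 := by
    have : ρ.trace = ∑ p : Fin n1 × Fin n2, ρ p p := rfl
    rw [this]
    rw [Fintype.sum_prod_type]
    have : ∀ j : Fin n1, ∀ l : Fin n2, ρ (j, l) (j, l) = (k:ℂ)⁻¹ * ∑ i : Fin k, ((a j :ℝ):ℂ) * ((b l:ℝ):ℂ) := by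
      intro j l
      rw [hent]
      congr 1
      exact Finset.sum_congr rfl fun i _ => by rw [hua, hvb]
    simp only [this, Finset.sum_const, Finset.card_univ, Fintype.card_fin, nsmul_eq_mul]
    simp only [inv_mul_cancel_left₀ hkC, ← Finset.mul_sum, hsum_b, mul_one]
    exact hsum_a
  -- partial traces
  have hjk : ∀ j : Fin n1, (j : ℕ) < k := fun j => lt_of_lt_of_le (j.2.trans_le hle) hk1
  have hlk : ∀ l : Fin n2, (l : ℕ) < k := fun l => lt_of_lt_of_le l.2 hk1
  have htr2 : trace2 ρ = Matrix.diagonal (fun j => ((a j : ℝ) : ℂ)) := by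
    ext j j'
    show (∑ l : Fin n2, ρ (j, l) (j', l)) = _
    have hterm : ∀ l : Fin n2, ρ (j, l) (j', l) =
        (k:ℂ)⁻¹ * ((∑ i : Fin k, (ω ^ (j:ℕ) * (ω ^ (j':ℕ))⁻¹) ^ (i:ℕ)) *
          ((Real.sqrt (a j) * Real.sqrt (a j') : ℝ) : ℂ)) * ((b l : ℝ) : ℂ) := by
      intro l
      rw [hent]
      simp only [Finset.sum_mul, Finset.mul_sum]
      refine Finset.sum_congr rfl fun i _ => ?_
      rw [huv, hvb]
      ring
    rw [Finset.sum_congr rfl fun l _ => hterm l, ← Finset.mul_sum, hsum_b, mul_one,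
      key _ _ (hjk j) (hjk j')]
    rcases eq_or_ne j j' with h | h
    · subst h
      rw [if_pos rfl, Matrix.diagonal_apply_eq, Real.mul_self_sqrt (ha j).le]
      field_simp
    · rw [if_neg (fun hc => h (Fin.ext hc)), Matrix.diagonal_apply_ne _ h]
      ring
  have htr1 : trace1 ρ = Matrix.diagonal (fun l => ((b l : ℝ) : ℂ)) := by
    ext l l'
    show (∑ j : Fin n1, ρ (j, l) (j, l')) = _
    have hterm : ∀ j : Fin n1, ρ (j, l) (j, l') =
        (k:ℂ)⁻¹ * ((∑ i : Fin k, (ω ^ (l:ℕ) * (ω ^ (l':ℕ))⁻¹) ^ (i:ℕ)) *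
          ((Real.sqrt (b l) * Real.sqrt (b l') : ℝ) : ℂ)) * ((a j : ℝ) : ℂ) := by
      intro j
      rw [hent]
      simp only [Finset.sum_mul, Finset.mul_sum]
      refine Finset.sum_congr rfl fun i _ => ?_
      rw [hvv, hua]
      ring
    rw [Finset.sum_congr rfl fun j _ => hterm j, ← Finset.mul_sum, hsum_a, mul_one,
      key _ _ (hlk l) (hlk l')]
    rcases eq_or_ne l l' with h | h
    · subst h
      rw [if_pos rfl, Matrix.diagonal_apply_eq, Real.mul_self_sqrt (hb l).le]
      field_simp
    · rw [if_neg (fun hc => h (Fin.ext hc)), Matrix.diagonal_apply_ne _ h]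
      ring
  -- rank
  have hrank : ρ.rank = k := by
    rw [hWW, Matrix.rank_self_mul_conjTranspose]
    refine le_antisymm (W.rank_le_card_width.trans (by simp)) ?_
    -- row selection
    have hjlt : ∀ i' : Fin k, min (i' : ℕ) (n1 - 1) < n1 := fun i' => by omega
    have hllt : ∀ i' : Fin k, (i' : ℕ) - min (i' : ℕ) (n1 - 1) < n2 := fun i' => by
      have := i'.2; omega
    set r : Fin k → Fin n1 × Fin n2 :=
      fun i' => (⟨min (i' : ℕ) (n1 - 1), hjlt i'⟩, ⟨(i' : ℕ) - min (i' : ℕ) (n1 - 1), hllt i'⟩)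
      with hr
    set S : Matrix (Fin k) (Fin n1 × Fin n2) ℂ :=
      Matrix.of (fun i' p => if p = r i' then 1 else 0) with hS
    set M : Matrix (Fin k) (Fin k) ℂ := S * W with hM
    have hMW : M = Matrix.of (fun i' i => W (r i') i) := by
      ext i' i
      simp only [hM, Matrix.mul_apply, hS, Matrix.of_apply, ite_mul, one_mul, zero_mul]
      rw [Finset.sum_ite_eq' Finset.univ (r i') (fun p => W p i)]
      simp
    -- M = diagonal * vandermonde
    set d : Fin k → ℂ := fun i' =>
      (c : ℂ) * ((Real.sqrt (a (r i').1) * Real.sqrt (b (r i').2) : ℝ) : ℂ) with hd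
    have hMdv : M = Matrix.diagonal d * Matrix.vandermonde (fun i' : Fin k => ω ^ (i' : ℕ)) := by
      rw [hMW]
      ext i' i
      rw [Matrix.diagonal_mul, Matrix.of_apply, Matrix.vandermonde_apply]
      show (c : ℂ) * (u i (r i').1 * v i (r i').2) = _
      rw [hu, hv, hd]
      have hsum : ((r i').1 : ℕ) + ((r i').2 : ℕ) = (i' : ℕ) := by
        simp only [hr]; omega
      rw [← hsum, ← pow_mul, add_mul, pow_add]
      push_cast
      ring
    have hdet : M.det ≠ 0 := by
      rw [hMdv, Matrix.det_mul, Matrix.det_diagonal]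
      apply mul_ne_zero
      · apply Finset.prod_ne_zero_iff.mpr
        intro i' _
        rw [hd]
        apply mul_ne_zero
        · simp only [ne_eq, Complex.ofReal_eq_zero, hc]
          exact inv_ne_zero (Real.sqrt_pos.mpr (by exact_mod_cast hk0)).ne'
        · simp only [ne_eq, Complex.ofReal_eq_zero]
          exact (mul_pos (Real.sqrt_pos.mpr (ha _)) (Real.sqrt_pos.mpr (hb _))).ne'
      · rw [Matrix.det_vandermonde_ne_zero_iff]
        intro i' i'' h
        exact Fin.ext (hprim.pow_inj i'.2 i''.2 h)
    have hMrank : M.rank = k := by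
      rw [Matrix.rank_of_isUnit M ((Matrix.isUnit_iff_isUnit_det M).mpr
        (isUnit_iff_ne_zero.mpr hdet))]
      simp
    calc k = M.rank := hMrank.symm
      _ ≤ W.rank := hM ▸ Matrix.rank_mul_le_right S W
  exact ⟨hpsd, htr, htr2, htr1, hrank⟩
end

section
/- Let ρ1 ∈ D_{n1} and ρ2 ∈ D_{n2} be density matrices with max{rank(ρ1), rank(ρ2)} ≤ k ≤ rank(ρ1) + rank(ρ2) − 1 for an integer k. Then there exists ρ ∈ S(ρ1,ρ2) with rank(ρ) = k. -/
/-!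
Diagonalize `ρ₁ = U₁ diag(p) U₁ᴴ` and `ρ₂ = U₂ diag(q) U₂ᴴ`. Conjugation by `U₁ ⊗ U₂` acts on the
marginals by `U₁` and `U₂` and preserves rank, so it suffices to treat diagonal marginals.
Label the supports of `p` and `q` by `0, …, r₁ - 1` and `0, …, r₂ - 1` and colour the pair `(a, b)`
by `(label a + label b) mod k`. For each colour `m` let `v_m` carry the entries `√(p_a q_b)` on the
pairs of colour `m`, and put `ρ = Σ_m v_m v_mᴴ`. Since `r₁, r₂ ≤ k`, the colouring is injective in
each coordinate, which kills every off-diagonal term of both marginals. Since `k < r₁ + r₂`, every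
colour is a sum of labels, so the `v_m` are `k` nonzero vectors with disjoint supports and
`rank ρ = k`.
-/

open Matrix Kronecker Finset
open scoped ComplexOrder

open Function

theorem Matrix.PosSemidef.exists_eq_conj_diagonal {n : Type*} [Fintype n] [DecidableEq n]
    {ρ : Matrix n n ℂ} (hρ : ρ.PosSemidef) (htr : ρ.trace = 1) :
    ∃ U : Matrix n n ℂ, Uᴴ * U = 1 ∧ ∃ p : n → ℝ, 0 ≤ p ∧ ∑ i, p i = 1 ∧
      (support p).ncard = ρ.rank ∧ ρ = U * diagonal (fun i => (p i : ℂ)) * Uᴴ := by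
  refine ⟨hρ.1.eigenvectorUnitary, Unitary.coe_star_mul_self _, hρ.1.eigenvalues,
    hρ.eigenvalues_nonneg, ?_, ?_, hρ.1.spectral_theorem⟩
  · have h := htr ▸ hρ.1.trace_eq_sum_eigenvalues
    rw [← RCLike.ofReal_sum, ← RCLike.ofReal_one, RCLike.ofReal_inj] at h
    exact h.symm
  · rw [hρ.1.rank_eq_card_non_zero_eigs, ← Nat.card_coe_set_eq, ← Nat.card_eq_fintype_card]
    rfl

theorem Matrix.rank_conj_of_conjTranspose_mul_self_eq_one {n : Type*} [Fintype n] [DecidableEq n]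
    {V : Matrix n n ℂ} (hV : Vᴴ * V = 1) (A : Matrix n n ℂ) : (V * A * Vᴴ).rank = A.rank := by
  rw [rank_mul_eq_left_of_isUnit_det _ _ (isUnit_det_of_left_inverse (mul_eq_one_comm.mp hV)),
    rank_mul_eq_right_of_isUnit_det _ _ (isUnit_det_of_left_inverse hV)]

theorem Set.Finite.exists_bijOn_Iio_ncard {ι : Type*} {s : Set ι} (hs : s.Finite) :
    ∃ φ : ι → ℕ, Set.BijOn φ s (Set.Iio s.ncard) :=
  hs.exists_bijOn_of_encard_eq (by rw [← hs.cast_ncard_eq]; exact (Nat.encard_range _).symm)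

theorem exists_coloring_of_lt_ncard_add_ncard {ι1 ι2 : Type*} {s1 : Set ι1} {s2 : Set ι2}
    (hs1 : s1.Finite) (hs2 : s2.Finite) {k : ℕ} (h1 : s1.ncard ≤ k) (h2 : s2.ncard ≤ k)
    (hk : k < s1.ncard + s2.ncard) :
    ∃ c : ι1 → ι2 → Fin k, (∀ b ∈ s2, Set.InjOn (c · b) s1) ∧ (∀ a ∈ s1, Set.InjOn (c a) s2) ∧
      ∀ m, ∃ a ∈ s1, ∃ b ∈ s2, c a b = m := by
  obtain ⟨φ1, hφ1⟩ := hs1.exists_bijOn_Iio_ncard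
  obtain ⟨φ2, hφ2⟩ := hs2.exists_bijOn_Iio_ncard
  have hφ1k {a} (ha : a ∈ s1) : φ1 a < k := (Set.mem_Iio.mp (hφ1.mapsTo ha)).trans_le h1
  have hφ2k {b} (hb : b ∈ s2) : φ2 b < k := (Set.mem_Iio.mp (hφ2.mapsTo hb)).trans_le h2
  refine ⟨fun a b => ⟨(φ1 a + φ2 b) % k, Nat.mod_lt _ (by omega)⟩, ?_, ?_, ?_⟩
  · intro b _ a ha a' ha' h
    exact hφ1.injOn ha ha' <| (Nat.ModEq.add_right_cancel' (φ2 b) (Fin.val_eq_of_eq h))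
      |>.eq_of_lt_of_lt (hφ1k ha) (hφ1k ha')
  · intro a _ b hb b' hb' h
    exact hφ2.injOn hb hb' <| (Nat.ModEq.add_left_cancel' (φ1 a) (Fin.val_eq_of_eq h))
      |>.eq_of_lt_of_lt (hφ2k hb) (hφ2k hb')
  · intro m
    have hm := m.isLt
    obtain ⟨a, ha, hai⟩ := hφ1.surjOn (show min (m : ℕ) (s1.ncard - 1) < s1.ncard by omega)
    obtain ⟨b, hb, hbj⟩ := hφ2.surjOn (show m - min (m : ℕ) (s1.ncard - 1) < s2.ncard by omega)
    refine ⟨a, ha, b, hb, Fin.ext ?_⟩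
    simp only [hai, hbj]
    rw [Nat.mod_eq_of_lt (by omega)]
    omega

section PartialTrace

variable {n1 n2 : ℕ}

theorem trace_trace2 (A : Matrix (Fin n1 × Fin n2) (Fin n1 × Fin n2) ℂ) :
    (trace2 A).trace = A.trace := by
  simp [trace2, Matrix.trace, Fintype.sum_prod_type]

theorem trace_kronecker_one_mul (B : Matrix (Fin n1) (Fin n1) ℂ)
    (A : Matrix (Fin n1 × Fin n2) (Fin n1 × Fin n2) ℂ) :
    ((B ⊗ₖ (1 : Matrix (Fin n2) (Fin n2) ℂ)) * A).trace = (B * trace2 A).trace := by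
  simp only [Matrix.trace, Matrix.diag_apply, mul_apply, kroneckerMap_apply, one_apply, mul_ite,
    mul_one, mul_zero, ite_mul, zero_mul, Fintype.sum_prod_type, sum_ite_eq, mem_univ, ↓reduceIte,
    trace2, of_apply, mul_sum]
  exact sum_congr rfl fun _ _ => sum_comm

theorem trace_one_kronecker_mul (B : Matrix (Fin n2) (Fin n2) ℂ)
    (A : Matrix (Fin n1 × Fin n2) (Fin n1 × Fin n2) ℂ) :
    (((1 : Matrix (Fin n1) (Fin n1) ℂ) ⊗ₖ B) * A).trace = (B * trace1 A).trace := by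
  simp only [Matrix.trace, Matrix.diag_apply, mul_apply, kroneckerMap_apply, one_apply, ite_mul,
    one_mul, zero_mul, Fintype.sum_prod_type, sum_ite_irrel, sum_const_zero, sum_ite_eq, mem_univ,
    ↓reduceIte, trace1, of_apply, mul_sum]
  rw [sum_comm]
  exact sum_congr rfl fun _ _ => sum_comm

theorem trace2_kronecker_conj (U1 : Matrix (Fin n1) (Fin n1) ℂ) {U2 : Matrix (Fin n2) (Fin n2) ℂ}
    (hU2 : U2ᴴ * U2 = 1) (A : Matrix (Fin n1 × Fin n2) (Fin n1 × Fin n2) ℂ) :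
    trace2 ((U1 ⊗ₖ U2) * A * (U1 ⊗ₖ U2)ᴴ) = U1 * trace2 A * U1ᴴ := by
  refine ext_iff_trace_mul_left.mpr fun B => ?_
  calc (B * trace2 ((U1 ⊗ₖ U2) * A * (U1 ⊗ₖ U2)ᴴ)).trace
      = ((U1 ⊗ₖ U2)ᴴ * (B ⊗ₖ 1) * (U1 ⊗ₖ U2) * A).trace := by
        rw [← trace_kronecker_one_mul, ← Matrix.mul_assoc, trace_mul_comm]
        simp only [Matrix.mul_assoc]
    _ = ((U1ᴴ * B * U1) ⊗ₖ (1 : Matrix (Fin n2) (Fin n2) ℂ) * A).trace := by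
        rw [conjTranspose_kronecker, ← mul_kronecker_mul, ← mul_kronecker_mul, Matrix.mul_one, hU2]
    _ = (B * (U1 * trace2 A * U1ᴴ)).trace := by
        rw [trace_kronecker_one_mul, Matrix.mul_assoc, Matrix.mul_assoc, trace_mul_comm]
        simp only [Matrix.mul_assoc]

theorem trace1_kronecker_conj {U1 : Matrix (Fin n1) (Fin n1) ℂ} (U2 : Matrix (Fin n2) (Fin n2) ℂ)
    (hU1 : U1ᴴ * U1 = 1) (A : Matrix (Fin n1 × Fin n2) (Fin n1 × Fin n2) ℂ) :
    trace1 ((U1 ⊗ₖ U2) * A * (U1 ⊗ₖ U2)ᴴ) = U2 * trace1 A * U2ᴴ := by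
  refine ext_iff_trace_mul_left.mpr fun B => ?_
  calc (B * trace1 ((U1 ⊗ₖ U2) * A * (U1 ⊗ₖ U2)ᴴ)).trace
      = ((U1 ⊗ₖ U2)ᴴ * (1 ⊗ₖ B) * (U1 ⊗ₖ U2) * A).trace := by
        rw [← trace_one_kronecker_mul, ← Matrix.mul_assoc, trace_mul_comm]
        simp only [Matrix.mul_assoc]
    _ = ((1 : Matrix (Fin n1) (Fin n1) ℂ) ⊗ₖ (U2ᴴ * B * U2) * A).trace := by
        rw [conjTranspose_kronecker, ← mul_kronecker_mul, ← mul_kronecker_mul, Matrix.mul_one, hU1]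
    _ = (B * (U2 * trace1 A * U2ᴴ)).trace := by
        rw [trace_one_kronecker_mul, Matrix.mul_assoc, Matrix.mul_assoc, trace_mul_comm]
        simp only [Matrix.mul_assoc]

end PartialTrace

section FiberMatrix

variable {ι κ : Type*} [DecidableEq κ]

def fiberMatrix (f : ι → κ) (w : ι → ℝ) : Matrix ι κ ℂ :=
  of fun i m => if f i = m then (w i : ℂ) else 0

theorem fiberMatrix_mul_conjTranspose_apply [Fintype κ] (f : ι → κ) (w : ι → ℝ) (i j : ι) :
    (fiberMatrix f w * (fiberMatrix f w)ᴴ) i j =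
      if f i = f j then ((w i * w j : ℝ) : ℂ) else 0 := by
  simp only [fiberMatrix, mul_apply, conjTranspose_apply, of_apply, apply_ite star, star_zero,
    Complex.star_def, Complex.conj_ofReal, mul_ite, ite_mul, zero_mul, mul_zero]
  split_ifs with h <;> simp [h, eq_comm]

variable [Fintype ι]

theorem conjTranspose_fiberMatrix_mul_self (f : ι → κ) (w : ι → ℝ) :
    (fiberMatrix f w)ᴴ * fiberMatrix f w =
      diagonal fun m => ((∑ i with f i = m, w i ^ 2 : ℝ) : ℂ) := by
  ext m m'
  simp only [fiberMatrix, mul_apply, conjTranspose_apply, of_apply, apply_ite star, star_zero,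
    Complex.star_def, Complex.conj_ofReal, mul_ite, ite_mul, zero_mul, mul_zero, diagonal_apply]
  split_ifs with h
  · subst h
    rw [Complex.ofReal_sum, sum_filter]
    exact sum_congr rfl fun i _ => by split_ifs <;> simp [sq]
  · exact sum_eq_zero fun i _ => by split_ifs with h1 h2 <;> simp_all

theorem rank_fiberMatrix_mul_conjTranspose [Fintype κ] {f : ι → κ} {w : ι → ℝ}
    (h : ∀ m, ∃ i, f i = m ∧ w i ≠ 0) :
    (fiberMatrix f w * (fiberMatrix f w)ᴴ).rank = Fintype.card κ := by
  have hpos (m : κ) : 0 < ∑ i with f i = m, w i ^ 2 := by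
    obtain ⟨i, hi, hwi⟩ := h m
    exact sum_pos' (fun j _ => sq_nonneg (w j)) ⟨i, by simpa using hi, by positivity⟩
  rw [rank_self_mul_conjTranspose, ← rank_conjTranspose_mul_self,
    conjTranspose_fiberMatrix_mul_self, rank_diagonal]
  exact Fintype.card_congr (Equiv.subtypeUnivEquiv fun m => by exact_mod_cast (hpos m).ne')

end FiberMatrix

section CouplingState

variable {n1 n2 : ℕ} {κ : Type*} [Fintype κ] [DecidableEq κ]
  (p : Fin n1 → ℝ) (q : Fin n2 → ℝ) (c : Fin n1 → Fin n2 → κ)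

noncomputable def couplingFactor : Matrix (Fin n1 × Fin n2) κ ℂ :=
  fiberMatrix (fun ab => c ab.1 ab.2) (fun ab => √(p ab.1) * √(q ab.2))

noncomputable def couplingState : Matrix (Fin n1 × Fin n2) (Fin n1 × Fin n2) ℂ :=
  couplingFactor p q c * (couplingFactor p q c)ᴴ

theorem posSemidef_couplingState : (couplingState p q c).PosSemidef :=
  posSemidef_self_mul_conjTranspose _

theorem couplingState_apply (a a' : Fin n1) (b b' : Fin n2) :
    couplingState p q c (a, b) (a', b') =
      if c a b = c a' b' then ((√(p a) * √(q b) * (√(p a') * √(q b')) : ℝ) : ℂ) else 0 :=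
  fiberMatrix_mul_conjTranspose_apply _ _ _ _

variable {p q c}

theorem trace2_couplingState (hp : 0 ≤ p) (hq : 0 ≤ q) (hq1 : ∑ b, q b = 1)
    (hc : ∀ b ∈ support q, Set.InjOn (c · b) (support p)) :
    trace2 (couplingState p q c) = diagonal fun a => (p a : ℂ) := by
  ext a a'
  simp only [trace2, of_apply, couplingState_apply, diagonal_apply]
  split_ifs with haa
  · subst haa
    simp only [if_true, mul_mul_mul_comm, Real.mul_self_sqrt (hp a), Real.mul_self_sqrt (hq _),
      ← Complex.ofReal_sum, ← mul_sum, hq1, mul_one]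
  · refine sum_eq_zero fun b _ => ?_
    split_ifs with hab
    · have : p a = 0 ∨ p a' = 0 ∨ q b = 0 := by
        by_contra! h
        exact haa (hc b h.2.2 h.1 h.2.1 hab)
      rcases this with h | h | h <;> simp [h]
    · rfl

theorem trace1_couplingState (hp : 0 ≤ p) (hq : 0 ≤ q) (hp1 : ∑ a, p a = 1)
    (hc : ∀ a ∈ support p, Set.InjOn (c a) (support q)) :
    trace1 (couplingState p q c) = diagonal fun b => (q b : ℂ) := by
  ext b b'
  simp only [trace1, of_apply, couplingState_apply, diagonal_apply]
  split_ifs with hbb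
  · subst hbb
    simp only [if_true, mul_mul_mul_comm, Real.mul_self_sqrt (hp _), Real.mul_self_sqrt (hq b),
      ← Complex.ofReal_sum, ← sum_mul, hp1, one_mul]
  · refine sum_eq_zero fun a _ => ?_
    split_ifs with hab
    · have : q b = 0 ∨ q b' = 0 ∨ p a = 0 := by
        by_contra! h
        exact hbb (hc a h.2.2 h.1 h.2.1 hab)
      rcases this with h | h | h <;> simp [h]
    · rfl

theorem rank_couplingState (hp : 0 ≤ p) (hq : 0 ≤ q)
    (hc : ∀ m, ∃ a ∈ support p, ∃ b ∈ support q, c a b = m) :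
    (couplingState p q c).rank = Fintype.card κ := by
  refine rank_fiberMatrix_mul_conjTranspose fun m => ?_
  obtain ⟨a, ha, b, hb, rfl⟩ := hc m
  exact ⟨(a, b), rfl, mul_ne_zero (Real.sqrt_ne_zero'.mpr ((hp a).lt_of_ne' ha))
    (Real.sqrt_ne_zero'.mpr ((hq b).lt_of_ne' hb))⟩

end CouplingState

/-- For any `k` with `max{rank ρ1, rank ρ2} ≤ k ≤ rank ρ1 + rank ρ2 − 1` there is a state
in `S(ρ1, ρ2)` of rank exactly `k`. -/
theorem stmt4 {n1 n2 : ℕ}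
    (ρ1 : Matrix (Fin n1) (Fin n1) ℂ) (ρ2 : Matrix (Fin n2) (Fin n2) ℂ)
    (hρ1 : ρ1.PosSemidef) (hρ1tr : ρ1.trace = 1)
    (hρ2 : ρ2.PosSemidef) (hρ2tr : ρ2.trace = 1)
    (k : ℕ) (hk1 : max ρ1.rank ρ2.rank ≤ k) (hk2 : k ≤ ρ1.rank + ρ2.rank - 1) :
    ∃ ρ : Matrix (Fin n1 × Fin n2) (Fin n1 × Fin n2) ℂ,
      ρ.PosSemidef ∧ ρ.trace = 1 ∧ trace2 ρ = ρ1 ∧ trace1 ρ = ρ2 ∧ ρ.rank = k := by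
  obtain ⟨U1, hU1, p, hp, hp1, hr1, hρ1_eq⟩ := hρ1.exists_eq_conj_diagonal hρ1tr
  obtain ⟨U2, hU2, q, hq, hq1, hr2, hρ2_eq⟩ := hρ2.exists_eq_conj_diagonal hρ2tr
  have hr1_pos : 0 < (support p).ncard :=
    (Set.ncard_pos (Set.toFinite _)).mpr (support_nonempty_iff.mpr (by rintro rfl; simp at hp1))
  obtain ⟨c, hc1, hc2, hc⟩ := exists_coloring_of_lt_ncard_add_ncard (Set.toFinite (support p))
    (Set.toFinite (support q)) (k := k) (by omega) (by omega) (by omega)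
  have htrace2 : trace2 ((U1 ⊗ₖ U2) * couplingState p q c * (U1 ⊗ₖ U2)ᴴ) = ρ1 := by
    rw [trace2_kronecker_conj U1 hU2, trace2_couplingState hp hq hq1 hc1, hρ1_eq]
  refine ⟨(U1 ⊗ₖ U2) * couplingState p q c * (U1 ⊗ₖ U2)ᴴ,
    (posSemidef_couplingState p q c).mul_mul_conjTranspose_same _, ?_, htrace2, ?_, ?_⟩
  · rw [← trace_trace2, htrace2, hρ1tr]
  · rw [trace1_kronecker_conj U2 hU1, trace1_couplingState hp hq hp1 hc2, hρ2_eq]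
  · have hV : (U1 ⊗ₖ U2)ᴴ * (U1 ⊗ₖ U2) = 1 := by
      rw [conjTranspose_kronecker, ← mul_kronecker_mul, hU1, hU2, one_kronecker_one]
    rw [rank_conj_of_conjTranspose_mul_self_eq_one hV, rank_couplingState hp hq hc,
      Fintype.card_fin]
end

section
/- Let ρ1 ∈ D_{n1} and ρ2 ∈ D_{n2} be density matrices. Then there exist an integer k ≤ max{rank(ρ1), rank(ρ2)} and positive semidefinite matrices C_1,...,C_k ∈ M_{n1}(ℂ) and C̃_1,...,C̃_k ∈ M_{n2}(ℂ) such that: for each i, C_i and C̃_i have the same nonzero eigenvalues counting multiplicities; ρ1 = C_1 + ... + C_k; and ρ2 = C̃_1 + ... + C̃_k. -/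
/-!
Diagonalize `ρ₁ = ∑ᵢ λᵢ uᵢuᵢ*` and `ρ₂ = ∑ⱼ μⱼ vⱼvⱼ*`. Since `k = max r₁ r₂`, the nonzero `λᵢ`
can be given pairwise distinct positions `aᵢ` in the cyclic group `ℤ/k`, and so can the nonzero
`μⱼ` (positions `bⱼ`); let `p, q : ℤ/k → ℝ` be the resulting probability vectors. For `c ∈ ℤ/k` put
`C_c = ∑ᵢ λᵢ q(c - aᵢ) uᵢuᵢ*` and `C̃_c = ∑ⱼ μⱼ p(c - bⱼ) vⱼvⱼ*`. Summing over `c` returns `ρ₁`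
and `ρ₂` because `∑ p = ∑ q = 1`, and, the positions being distinct, the nonzero eigenvalues of
both `C_c` and `C̃_c` are the nonzero numbers `p(a) q(c - a)`, `a ∈ ℤ/k`.
-/

open Matrix Finset
open scoped ComplexOrder

section NonzeroValues

variable {ι κ M : Type*} [Fintype ι] [Fintype κ]

def nonzeroValues [Zero M] [DecidableEq M] (f : ι → M) : Multiset M :=
  (univ.val.map f).filter (· ≠ 0)

lemma nonzeroValues_eq_map [Zero M] [DecidableEq M] (f : ι → M) :
    nonzeroValues f = ({i | f i ≠ 0} : Finset ι).val.map f := by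
  rw [nonzeroValues, Multiset.filter_map, filter_val]
  rfl

lemma nonzeroValues_comp_equiv [Zero M] [DecidableEq M] (f : κ → M) (e : ι ≃ κ) :
    nonzeroValues (f ∘ e) = nonzeroValues f := by
  rw [nonzeroValues, nonzeroValues, ← Multiset.map_map, Multiset.map_univ_val_equiv]

lemma nonzeroValues_sum_fiberwise [AddCommMonoid M] [DecidableEq M] [DecidableEq κ]
    (f : ι → M) (α : ι → κ) (hα : Set.InjOn α {i | f i ≠ 0}) :
    nonzeroValues (fun a ↦ ∑ i with α i = a, f i) = nonzeroValues f := by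
  set g : κ → M := fun a ↦ ∑ i with α i = a, f i
  set s : Finset ι := {i | f i ≠ 0}
  have hg : ∀ i ∈ s, g (α i) = f i := fun i hi ↦
    sum_eq_single_of_mem i (by simp) fun j hj hji ↦ by
      by_contra hj0
      exact hji (hα hj0 (mem_filter.1 hi).2 (mem_filter.1 hj).2)
  have hsupp : ({a | g a ≠ 0} : Finset κ) = s.image α := by
    ext a
    simp only [mem_filter, mem_univ, true_and, mem_image]
    constructor
    · intro ha
      obtain ⟨i, hi, hfi⟩ := exists_ne_zero_of_sum_ne_zero ha
      exact ⟨i, by simpa [s] using hfi, (mem_filter.1 hi).2⟩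
    · rintro ⟨i, hi, rfl⟩
      rw [hg i hi]
      exact (mem_filter.1 hi).2
  have hinj : Set.InjOn α s := hα.mono fun i hi ↦ (mem_filter.1 hi).2
  rw [nonzeroValues_eq_map, nonzeroValues_eq_map, hsupp, image_val_of_injOn hinj,
    Multiset.map_map]
  exact Multiset.map_congr rfl hg

lemma nonzeroValues_mul_comp_of_injOn [NonUnitalNonAssocSemiring M] [DecidableEq M]
    [DecidableEq κ] (f : ι → M) (α : ι → κ) (hα : Set.InjOn α {i | f i ≠ 0}) (h : κ → M) :
    nonzeroValues (fun i ↦ f i * h (α i)) =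
      nonzeroValues (fun a ↦ (∑ i with α i = a, f i) * h a) := by
  rw [← nonzeroValues_sum_fiberwise (fun i ↦ f i * h (α i)) α
    (hα.mono fun _ ↦ left_ne_zero_of_mul)]
  congr 1
  ext a
  rw [sum_mul]
  exact sum_congr rfl fun i hi ↦ by rw [(mem_filter.1 hi).2]

end NonzeroValues

lemma exists_injOn_fin_of_card_le {ι : Type*} {k : ℕ} [NeZero k] (s : Set ι) [Fintype s]
    (hs : Fintype.card s ≤ k) : ∃ α : ι → Fin k, Set.InjOn α s := by
  obtain ⟨e⟩ := Function.Embedding.nonempty_of_card_le (hs.trans (Fintype.card_fin k).ge)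
  exact Set.exists_injOn_iff_injective.2 ⟨e, e.injective⟩

theorem exists_decomposition_nonzeroValues_eq {ι κ : Type*} [Fintype ι] [Fintype κ] {k : ℕ}
    (f : ι → ℝ) (g : κ → ℝ) (hf : 0 ≤ f) (hg : 0 ≤ g) (hf1 : ∑ i, f i = 1) (hg1 : ∑ j, g j = 1)
    (hfk : Fintype.card {i // f i ≠ 0} ≤ k) (hgk : Fintype.card {j // g j ≠ 0} ≤ k) :
    ∃ (A : Fin k → ι → ℝ) (B : Fin k → κ → ℝ), (∀ c, 0 ≤ A c) ∧ (∀ c, 0 ≤ B c) ∧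
      ∑ c, A c = f ∧ ∑ c, B c = g ∧ ∀ c, nonzeroValues (A c) = nonzeroValues (B c) := by
  obtain ⟨i₀, -, hi₀⟩ := exists_ne_zero_of_sum_ne_zero (hf1.trans_ne one_ne_zero)
  have : NeZero k := ⟨((Fintype.card_pos_iff.2 ⟨⟨i₀, hi₀⟩⟩).trans_le hfk).ne'⟩
  obtain ⟨α, hα⟩ := exists_injOn_fin_of_card_le {i | f i ≠ 0} hfk
  obtain ⟨β, hβ⟩ := exists_injOn_fin_of_card_le {j | g j ≠ 0} hgk
  set p : Fin k → ℝ := fun a ↦ ∑ i with α i = a, f i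
  set q : Fin k → ℝ := fun b ↦ ∑ j with β j = b, g j
  have hp : 0 ≤ p := fun a ↦ sum_nonneg fun i _ ↦ hf i
  have hq : 0 ≤ q := fun b ↦ sum_nonneg fun j _ ↦ hg j
  have hp1 (b : Fin k) : ∑ c, p (c - b) = 1 := by
    rw [Fintype.sum_equiv (Equiv.subRight b) (fun c ↦ p (c - b)) p fun _ ↦ rfl, sum_fiberwise, hf1]
  have hq1 (a : Fin k) : ∑ c, q (c - a) = 1 := by
    rw [Fintype.sum_equiv (Equiv.subRight a) (fun c ↦ q (c - a)) q fun _ ↦ rfl, sum_fiberwise, hg1]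
  refine ⟨fun c i ↦ f i * q (c - α i), fun c j ↦ g j * p (c - β j),
    fun c i ↦ mul_nonneg (hf i) (hq _), fun c j ↦ mul_nonneg (hg j) (hp _),
    funext fun i ↦ ?_, funext fun j ↦ ?_, fun c ↦ ?_⟩
  · simp [Finset.sum_apply, ← mul_sum, hq1]
  · simp [Finset.sum_apply, ← mul_sum, hp1]
  calc nonzeroValues (fun i ↦ f i * q (c - α i))
      = nonzeroValues (fun a ↦ p a * q (c - a)) :=
        nonzeroValues_mul_comp_of_injOn f α hα fun a ↦ q (c - a)
    _ = nonzeroValues ((fun b ↦ q b * p (c - b)) ∘ Equiv.subLeft c) := by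
      congr 1
      ext a
      simp [mul_comm]
    _ = nonzeroValues (fun b ↦ q b * p (c - b)) := nonzeroValues_comp_equiv _ _
    _ = nonzeroValues (fun j ↦ g j * p (c - β j)) :=
      (nonzeroValues_mul_comp_of_injOn g β hβ fun b ↦ p (c - b)).symm

namespace Matrix

open Unitary

variable {𝕜 n ι : Type*} [RCLike 𝕜] [Fintype n] [DecidableEq n]

lemma posSemidef_conjStarAlgAut_diagonal (U : unitary (Matrix n n 𝕜)) {d : n → ℝ} (hd : 0 ≤ d) :
    (conjStarAlgAut 𝕜 _ U (diagonal (RCLike.ofReal ∘ d))).PosSemidef := by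
  rw [conjStarAlgAut_apply, star_eq_conjTranspose]
  exact (posSemidef_diagonal_iff.2 fun i ↦ RCLike.ofReal_nonneg.2 (hd i)).mul_mul_conjTranspose_same _

lemma IsHermitian.map_eigenvalues_conjStarAlgAut_diagonal (U : unitary (Matrix n n 𝕜))
    (d : n → ℝ) (h : (conjStarAlgAut 𝕜 _ U (diagonal (RCLike.ofReal ∘ d))).IsHermitian) :
    univ.val.map h.eigenvalues = univ.val.map d := by
  apply Multiset.map_injective (RCLike.ofReal_injective (K := 𝕜))
  rw [Multiset.map_map, ← h.roots_charpoly_eq_eigenvalues, conjStarAlgAut_apply,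
    charpoly_mul_comm, ← mul_assoc, coe_star_mul_self, one_mul, charpoly_diagonal]
  simp [Polynomial.roots_prod, Polynomial.X_sub_C_ne_zero, prod_ne_zero_iff]

lemma IsHermitian.exists_posSemidef_decomposition [Fintype ι] {ρ : Matrix n n 𝕜}
    (hρ : ρ.IsHermitian) (A : ι → n → ℝ) (hA : ∀ c, 0 ≤ A c)
    (hsum : ∑ c, A c = hρ.eigenvalues) :
    ∃ (C : ι → Matrix n n 𝕜) (hC : ∀ c, (C c).PosSemidef),
      (∀ c, univ.val.map (hC c).1.eigenvalues = univ.val.map (A c)) ∧ ρ = ∑ c, C c := by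
  refine ⟨fun c ↦ conjStarAlgAut 𝕜 _ hρ.eigenvectorUnitary (diagonal (RCLike.ofReal ∘ A c)),
    fun c ↦ posSemidef_conjStarAlgAut_diagonal _ (hA c),
    fun c ↦ IsHermitian.map_eigenvalues_conjStarAlgAut_diagonal _ _ _, ?_⟩
  conv_lhs => rw [hρ.spectral_theorem, ← hsum]
  rw [← map_sum]
  congr 1
  ext i j
  rcases eq_or_ne i j with rfl | hij
  · simp [Matrix.sum_apply]
  · simp [Matrix.sum_apply, hij]

lemma IsHermitian.sum_eigenvalues_eq_one {ρ : Matrix n n 𝕜} (hρ : ρ.IsHermitian)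
    (htr : ρ.trace = 1) : ∑ i, hρ.eigenvalues i = 1 := by
  exact_mod_cast hρ.trace_eq_sum_eigenvalues.symm.trans htr

end Matrix

/-- Any pair of density matrices can be simultaneously decomposed as sums of at most
`max{rank ρ1, rank ρ2}` pairwise isospectral positive semidefinite matrices. -/
theorem stmt7 {n1 n2 : ℕ}
    (ρ1 : Matrix (Fin n1) (Fin n1) ℂ) (ρ2 : Matrix (Fin n2) (Fin n2) ℂ)
    (hρ1 : ρ1.PosSemidef) (hρ1tr : ρ1.trace = 1)
    (hρ2 : ρ2.PosSemidef) (hρ2tr : ρ2.trace = 1) :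
    ∃ k : ℕ, k ≤ max ρ1.rank ρ2.rank ∧
      ∃ (C : Fin k → Matrix (Fin n1) (Fin n1) ℂ)
        (C' : Fin k → Matrix (Fin n2) (Fin n2) ℂ)
        (hC : ∀ i, (C i).PosSemidef) (hC' : ∀ i, (C' i).PosSemidef),
        (∀ i, Multiset.filter (fun x => x ≠ 0)
            (Finset.univ.val.map (hC i).1.eigenvalues) =
          Multiset.filter (fun x => x ≠ 0)
            (Finset.univ.val.map (hC' i).1.eigenvalues)) ∧
        ρ1 = ∑ i, C i ∧ ρ2 = ∑ i, C' i := by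
  obtain ⟨A, B, hA, hB, hAsum, hBsum, hAB⟩ :=
    exists_decomposition_nonzeroValues_eq (k := max ρ1.rank ρ2.rank)
      hρ1.1.eigenvalues hρ2.1.eigenvalues hρ1.eigenvalues_nonneg hρ2.eigenvalues_nonneg
      (hρ1.1.sum_eigenvalues_eq_one hρ1tr) (hρ2.1.sum_eigenvalues_eq_one hρ2tr)
      (hρ1.1.rank_eq_card_non_zero_eigs ▸ le_max_left _ _)
      (hρ2.1.rank_eq_card_non_zero_eigs ▸ le_max_right _ _)
  obtain ⟨C, hC, hCeig, hρ1sum⟩ := hρ1.1.exists_posSemidef_decomposition A hA hAsum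
  obtain ⟨C', hC', hC'eig, hρ2sum⟩ := hρ2.1.exists_posSemidef_decomposition B hB hBsum
  refine ⟨_, le_rfl, C, C', hC, hC', fun c ↦ ?_, hρ1sum, hρ2sum⟩
  simpa only [nonzeroValues, hCeig c, hC'eig c] using hAB c
end

section
/- Let Z be an N×N Hermitian complex matrix with spectral decomposition Z = U·diag(λ_1,...,λ_N)·U*, where U is unitary. Define X₀ = U·diag(t_1,...,t_N)·U*, where t_i = λ_i if λ_i ≥ 0 and t_i = 0 if λ_i < 0. Then X₀ is positive semidefinite, and for every positive semidefinite Y ∈ M_N(ℂ), ‖Z − X₀‖_F ≤ ‖Z − Y‖_F. -/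
open Matrix Finset
open scoped ComplexOrder

/-!
Conjugating by the unitary `U` preserves the Frobenius norm and the positive semidefinite cone,
so one may assume `Z = diag(λ)`. Then `‖Z - Y‖_F² ≥ ∑ᵢ |λᵢ - Yᵢᵢ|²`, and since every diagonal
entry of a positive semidefinite `Y` is a nonnegative real, `|λᵢ - Yᵢᵢ| ≥ |λᵢ - max(λᵢ, 0)|`.
-/

section Frobenius

variable {n : Type*} [Fintype n]

lemma frobNorm_eq_sqrt_sum_normSq (X : Matrix n n ℂ) :
    frobNorm X = √(∑ i, ∑ j, Complex.normSq (X j i)) := by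
  unfold frobNorm
  congr 1
  simp only [trace, diag_apply, mul_apply, conjTranspose_apply, Complex.re_sum]
  refine sum_congr rfl fun i _ => sum_congr rfl fun j _ => ?_
  rw [mul_comm, Complex.star_def, Complex.mul_conj, Complex.ofReal_re]

lemma frobNorm_diagonal [DecidableEq n] (d : n → ℂ) :
    frobNorm (diagonal d) = √(∑ i, Complex.normSq (d i)) := by
  rw [frobNorm_eq_sqrt_sum_normSq]
  congr 1
  refine sum_congr rfl fun i _ => ?_
  rw [sum_eq_single i (fun _ _ hji => by simp [diagonal_apply_ne _ hji]) (by simp),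
    diagonal_apply_eq]

lemma sum_normSq_diag_le_sum_normSq (X : Matrix n n ℂ) :
    ∑ i, Complex.normSq (X i i) ≤ ∑ i, ∑ j, Complex.normSq (X j i) :=
  sum_le_sum fun i _ =>
    single_le_sum (f := fun j => Complex.normSq (X j i))
      (fun _ _ => Complex.normSq_nonneg _) (mem_univ i)

lemma frobNorm_unitary_conj [DecidableEq n] {U : Matrix n n ℂ} (hU : U ∈ unitaryGroup n ℂ)
    (A : Matrix n n ℂ) : frobNorm (U * A * Uᴴ) = frobNorm A := by
  have hUU : Uᴴ * U = 1 := mem_unitaryGroup_iff'.mp hU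
  have hconj : (U * A * Uᴴ)ᴴ * (U * A * Uᴴ) = U * (Aᴴ * A) * Uᴴ := by
    simp only [conjTranspose_mul, conjTranspose_conjTranspose, Matrix.mul_assoc]
    rw [← Matrix.mul_assoc Uᴴ U, hUU, Matrix.one_mul]
  unfold frobNorm
  rw [hconj, trace_mul_cycle, ← Matrix.mul_assoc, hUU, Matrix.one_mul]

end Frobenius

lemma Complex.normSq_sub_max_zero_le (l : ℝ) {w : ℂ} (hw : 0 ≤ w) :
    Complex.normSq ((l : ℂ) - (max 0 l : ℝ)) ≤ Complex.normSq (l - w) := by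
  obtain ⟨hre, him⟩ := Complex.le_def.mp hw
  simp only [Complex.zero_re, Complex.zero_im] at hre him
  rw [← Complex.ofReal_sub, Complex.normSq_ofReal, Complex.normSq_apply]
  simp only [Complex.sub_re, Complex.sub_im, Complex.ofReal_re, Complex.ofReal_im, ← him]
  rcases le_total 0 l with hl | hl
  · simp [max_eq_right hl, mul_self_nonneg]
  · rw [max_eq_left hl]
    nlinarith

lemma frobNorm_diagonal_sub_max_zero_le {n : Type*} [Fintype n] [DecidableEq n]
    (lam : n → ℝ) {W : Matrix n n ℂ} (hW : W.PosSemidef) :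
    frobNorm (diagonal (fun i => (lam i : ℂ)) - diagonal (fun i => ((max 0 (lam i) : ℝ) : ℂ)))
      ≤ frobNorm (diagonal (fun i => (lam i : ℂ)) - W) := by
  rw [diagonal_sub, frobNorm_diagonal, frobNorm_eq_sqrt_sum_normSq]
  refine Real.sqrt_le_sqrt ?_
  calc ∑ i, Complex.normSq ((lam i : ℂ) - (max 0 (lam i) : ℝ))
      ≤ ∑ i, Complex.normSq ((diagonal (fun i => (lam i : ℂ)) - W) i i) :=
        sum_le_sum fun i _ => by
          simpa using Complex.normSq_sub_max_zero_le (lam i) (hW.diag_nonneg (i := i))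
    _ ≤ _ := sum_normSq_diag_le_sum_normSq _

theorem stmt11_general {N : ℕ} (Z : Matrix (Fin N) (Fin N) ℂ)
    (U : Matrix (Fin N) (Fin N) ℂ) (hU : U ∈ Matrix.unitaryGroup (Fin N) ℂ)
    (lam : Fin N → ℝ)
    (hZU : Z = U * Matrix.diagonal (fun i => (lam i : ℂ)) * Uᴴ)
    (X₀ : Matrix (Fin N) (Fin N) ℂ)
    (hX₀ : X₀ = U * Matrix.diagonal (fun i => ((if 0 ≤ lam i then lam i else 0 : ℝ) : ℂ)) * Uᴴ) :
    X₀.PosSemidef ∧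
      ∀ Y : Matrix (Fin N) (Fin N) ℂ, Y.PosSemidef →
        frobNorm (Z - X₀) ≤ frobNorm (Z - Y) := by
  simp only [← max_def] at hX₀
  subst hZU hX₀
  refine ⟨(posSemidef_diagonal_iff.mpr fun i => Complex.zero_le_real.mpr
    (le_max_left 0 (lam i))).mul_mul_conjTranspose_same U, fun Y hY => ?_⟩
  have hUU : U * Uᴴ = 1 := mem_unitaryGroup_iff.mp hU
  have hY_conj : Y = U * (Uᴴ * Y * U) * Uᴴ := by
    calc Y = (U * Uᴴ) * Y * (U * Uᴴ) := by rw [hUU, Matrix.one_mul, Matrix.mul_one]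
      _ = U * (Uᴴ * Y * U) * Uᴴ := by noncomm_ring
  rw [hY_conj, ← Matrix.sub_mul, ← Matrix.mul_sub, ← Matrix.sub_mul, ← Matrix.mul_sub,
    frobNorm_unitary_conj hU, frobNorm_unitary_conj hU]
  exact frobNorm_diagonal_sub_max_zero_le lam (hY.conjTranspose_mul_mul_same U)

/-- Projection onto the positive semidefinite cone: truncating the negative eigenvalues of a
Hermitian matrix `Z` yields the Frobenius-nearest positive semidefinite matrix. -/
theorem stmt11 {N : ℕ} (Z : Matrix (Fin N) (Fin N) ℂ) (hZ : Z.IsHermitian)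
    (U : Matrix (Fin N) (Fin N) ℂ) (hU : U ∈ Matrix.unitaryGroup (Fin N) ℂ)
    (lam : Fin N → ℝ)
    (hZU : Z = U * Matrix.diagonal (fun i => (lam i : ℂ)) * Uᴴ)
    (X₀ : Matrix (Fin N) (Fin N) ℂ)
    (hX₀ : X₀ = U * Matrix.diagonal (fun i => ((if 0 ≤ lam i then lam i else 0 : ℝ) : ℂ)) * Uᴴ) :
    X₀.PosSemidef ∧
      ∀ Y : Matrix (Fin N) (Fin N) ℂ, Y.PosSemidef →
        frobNorm (Z - X₀) ≤ frobNorm (Z - Y) :=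
  stmt11_general Z U hU lam hZU X₀ hX₀
end

section
/- Let n1, n2, n3 be positive integers, let σ1 ∈ M_{n1·n2}(ℂ) and σ2 ∈ M_{n2·n3}(ℂ) be Hermitian. Then there exists a Hermitian ρ ∈ M_{n1·n2·n3}(ℂ) with tr_1(ρ) = σ2 and tr_3(ρ) = σ1 if and only if the system-2 marginals of σ1 and σ2 agree, i.e., the partial trace of σ1 over its first factor equals the partial trace of σ2 over its second factor: tr_1(σ1) = tr_3'(σ2) as elements of M_{n2}(ℂ), where tr_1(σ1) = Σ_{j=1}^{n1} (σ1)_{jj} for σ1 viewed as an n1×n1 block matrix with n2×n2 blocks, and tr_3'(σ2) is obtained by applying the trace entrywise to the n3×n3 blocks of σ2 viewed as an n2×n2 block matrix. -/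
open Matrix Finset

/-- Partial trace of a tripartite matrix over the first subsystem. -/
noncomputable def ptr1 {n1 n2 n3 : ℕ}
    (ρ : Matrix (Fin n1 × Fin n2 × Fin n3) (Fin n1 × Fin n2 × Fin n3) ℂ) :
    Matrix (Fin n2 × Fin n3) (Fin n2 × Fin n3) ℂ :=
  Matrix.of fun p q => ∑ k : Fin n1, ρ (k, p) (k, q)

/-- Partial trace of a tripartite matrix over the third subsystem. -/
noncomputable def ptr3 {n1 n2 n3 : ℕ}
    (ρ : Matrix (Fin n1 × Fin n2 × Fin n3) (Fin n1 × Fin n2 × Fin n3) ℂ) :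
    Matrix (Fin n1 × Fin n2) (Fin n1 × Fin n2) ℂ :=
  Matrix.of fun p q => ∑ t : Fin n3, ρ (p.1, p.2, t) (q.1, q.2, t)

/-- Partial trace of a bipartite matrix over its first factor. -/
noncomputable def btr1 {m n : ℕ} (σ : Matrix (Fin m × Fin n) (Fin m × Fin n) ℂ) :
    Matrix (Fin n) (Fin n) ℂ :=
  Matrix.of fun i j => ∑ k : Fin m, σ (k, i) (k, j)

/-- Partial trace of a bipartite matrix over its second factor. -/
noncomputable def btr2 {m n : ℕ} (σ : Matrix (Fin m × Fin n) (Fin m × Fin n) ℂ) :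
    Matrix (Fin m) (Fin m) ℂ :=
  Matrix.of fun i j => ∑ t : Fin n, σ (i, t) (j, t)

/-!
Necessity: the middle marginals of `σ1 = tr_3 ρ` and `σ2 = tr_1 ρ` are both the partial trace of `ρ`
over systems 1 and 3. Sufficiency: with `τ` the common middle marginal, take
`ρ = σ1 ⊗ 1/n3 + 1/n1 ⊗ σ2 - 1/n1 ⊗ τ ⊗ 1/n3`. Tracing out system 1 turns the first and last terms
into the same `τ ⊗ 1/n3`; tracing out system 3 turns the last two into `1/n1 ⊗ τ`.
-/

open scoped Kronecker

theorem Matrix.IsHermitian.kronecker {l m R : Type*} [CommMagma R] [StarMul R]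
    {A : Matrix l l R} {B : Matrix m m R} (hA : A.IsHermitian) (hB : B.IsHermitian) :
    (A ⊗ₖ B).IsHermitian := by
  rw [IsHermitian, conjTranspose_kronecker, hA, hB]

section PartialTrace

variable {n1 n2 n3 : ℕ}

theorem btr1_ptr3 (ρ : Matrix (Fin n1 × Fin n2 × Fin n3) (Fin n1 × Fin n2 × Fin n3) ℂ) :
    btr1 (ptr3 ρ) = btr2 (ptr1 ρ) := by
  ext i j
  simp only [btr1, btr2, ptr1, ptr3, of_apply]
  exact sum_comm

theorem Matrix.IsHermitian.btr1 {σ : Matrix (Fin n1 × Fin n2) (Fin n1 × Fin n2) ℂ}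
    (hσ : σ.IsHermitian) : (btr1 σ).IsHermitian := by
  ext i j
  simp only [conjTranspose_apply, _root_.btr1, of_apply, star_sum, hσ.apply]

theorem ptr1_add (ρ ρ' : Matrix (Fin n1 × Fin n2 × Fin n3) (Fin n1 × Fin n2 × Fin n3) ℂ) :
    ptr1 (ρ + ρ') = ptr1 ρ + ptr1 ρ' := by
  ext p q
  simp [ptr1, sum_add_distrib]

theorem ptr1_sub (ρ ρ' : Matrix (Fin n1 × Fin n2 × Fin n3) (Fin n1 × Fin n2 × Fin n3) ℂ) :
    ptr1 (ρ - ρ') = ptr1 ρ - ptr1 ρ' := by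
  ext p q
  simp [ptr1, sum_sub_distrib]

theorem ptr1_smul (c : ℂ) (ρ : Matrix (Fin n1 × Fin n2 × Fin n3) (Fin n1 × Fin n2 × Fin n3) ℂ) :
    ptr1 (c • ρ) = c • ptr1 ρ := by
  ext p q
  simp [ptr1, mul_sum]

theorem ptr3_add (ρ ρ' : Matrix (Fin n1 × Fin n2 × Fin n3) (Fin n1 × Fin n2 × Fin n3) ℂ) :
    ptr3 (ρ + ρ') = ptr3 ρ + ptr3 ρ' := by
  ext p q
  simp [ptr3, sum_add_distrib]

theorem ptr3_sub (ρ ρ' : Matrix (Fin n1 × Fin n2 × Fin n3) (Fin n1 × Fin n2 × Fin n3) ℂ) :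
    ptr3 (ρ - ρ') = ptr3 ρ - ptr3 ρ' := by
  ext p q
  simp [ptr3, sum_sub_distrib]

theorem ptr3_smul (c : ℂ) (ρ : Matrix (Fin n1 × Fin n2 × Fin n3) (Fin n1 × Fin n2 × Fin n3) ℂ) :
    ptr3 (c • ρ) = c • ptr3 ρ := by
  ext p q
  simp [ptr3, mul_sum]

theorem ptr1_one_kronecker (M : Matrix (Fin n2 × Fin n3) (Fin n2 × Fin n3) ℂ) :
    ptr1 ((1 : Matrix (Fin n1) (Fin n1) ℂ) ⊗ₖ M) = (n1 : ℂ) • M := by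
  ext p q
  simp [ptr1]

theorem ptr3_one_kronecker (M : Matrix (Fin n2 × Fin n3) (Fin n2 × Fin n3) ℂ) :
    ptr3 ((1 : Matrix (Fin n1) (Fin n1) ℂ) ⊗ₖ M) = 1 ⊗ₖ btr2 M := by
  ext p q
  simp [ptr3, btr2, mul_sum]

theorem ptr1_kronecker_one (A : Matrix (Fin n1 × Fin n2) (Fin n1 × Fin n2) ℂ) :
    ptr1 (reindex (Equiv.prodAssoc _ _ _) (Equiv.prodAssoc _ _ _)
      (A ⊗ₖ (1 : Matrix (Fin n3) (Fin n3) ℂ))) = btr1 A ⊗ₖ 1 := by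
  ext p q
  simp [ptr1, btr1, sum_mul]

theorem ptr3_kronecker_one (A : Matrix (Fin n1 × Fin n2) (Fin n1 × Fin n2) ℂ) :
    ptr3 (reindex (Equiv.prodAssoc _ _ _) (Equiv.prodAssoc _ _ _)
      (A ⊗ₖ (1 : Matrix (Fin n3) (Fin n3) ℂ))) = (n3 : ℂ) • A := by
  ext p q
  simp [ptr3]

theorem btr2_kronecker_one (A : Matrix (Fin n1) (Fin n1) ℂ) :
    btr2 (A ⊗ₖ (1 : Matrix (Fin n2) (Fin n2) ℂ)) = (n2 : ℂ) • A := by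
  ext i j
  simp [btr2]

noncomputable def marginalExtension (σ1 : Matrix (Fin n1 × Fin n2) (Fin n1 × Fin n2) ℂ)
    (σ2 : Matrix (Fin n2 × Fin n3) (Fin n2 × Fin n3) ℂ) :
    Matrix (Fin n1 × Fin n2 × Fin n3) (Fin n1 × Fin n2 × Fin n3) ℂ :=
  (n3 : ℂ)⁻¹ • reindex (Equiv.prodAssoc _ _ _) (Equiv.prodAssoc _ _ _) (σ1 ⊗ₖ 1)
    + (n1 : ℂ)⁻¹ • (1 ⊗ₖ σ2) - ((n1 : ℂ) * n3)⁻¹ • (1 ⊗ₖ (btr1 σ1 ⊗ₖ 1))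

variable {σ1 : Matrix (Fin n1 × Fin n2) (Fin n1 × Fin n2) ℂ}
  {σ2 : Matrix (Fin n2 × Fin n3) (Fin n2 × Fin n3) ℂ}

theorem Matrix.IsHermitian.marginalExtension (hσ1 : σ1.IsHermitian) (hσ2 : σ2.IsHermitian) :
    (_root_.marginalExtension σ1 σ2).IsHermitian := by
  refine .sub (.add ?_ ?_) ?_
  · exact ((hσ1.kronecker isHermitian_one).reindex _).smul (IsSelfAdjoint.natCast _).inv₀
  · exact (isHermitian_one.kronecker hσ2).smul (IsSelfAdjoint.natCast _).inv₀
  · exact (isHermitian_one.kronecker (hσ1.btr1.kronecker isHermitian_one)).smul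
      ((IsSelfAdjoint.natCast _).mul (IsSelfAdjoint.natCast _)).inv₀

theorem ptr1_marginalExtension (hn1 : n1 ≠ 0) : ptr1 (marginalExtension σ1 σ2) = σ2 := by
  have : (n1 : ℂ) ≠ 0 := Nat.cast_ne_zero.mpr hn1
  simp only [marginalExtension, ptr1_sub, ptr1_add, ptr1_smul, ptr1_kronecker_one,
    ptr1_one_kronecker, smul_smul]
  field_simp
  module

theorem ptr3_marginalExtension (hn3 : n3 ≠ 0) (h : btr1 σ1 = btr2 σ2) :
    ptr3 (marginalExtension σ1 σ2) = σ1 := by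
  have : (n3 : ℂ) ≠ 0 := Nat.cast_ne_zero.mpr hn3
  simp only [marginalExtension, ptr3_sub, ptr3_add, ptr3_smul, ptr3_kronecker_one,
    ptr3_one_kronecker, btr2_kronecker_one, kronecker_smul, smul_smul, h]
  field_simp
  module

end PartialTrace

theorem stmt14_general {n1 n2 n3 : ℕ} (hn1 : 0 < n1) (hn3 : 0 < n3)
    (σ1 : Matrix (Fin n1 × Fin n2) (Fin n1 × Fin n2) ℂ) (hσ1 : σ1.IsHermitian)
    (σ2 : Matrix (Fin n2 × Fin n3) (Fin n2 × Fin n3) ℂ) (hσ2 : σ2.IsHermitian) :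
    (∃ ρ : Matrix (Fin n1 × Fin n2 × Fin n3) (Fin n1 × Fin n2 × Fin n3) ℂ,
        ρ.IsHermitian ∧ ptr1 ρ = σ2 ∧ ptr3 ρ = σ1) ↔
      btr1 σ1 = btr2 σ2 := by
  refine ⟨fun ⟨ρ, _, hρ1, hρ3⟩ => hρ1 ▸ hρ3 ▸ btr1_ptr3 ρ, fun h => ?_⟩
  exact ⟨marginalExtension σ1 σ2, hσ1.marginalExtension hσ2, ptr1_marginalExtension hn1.ne',
    ptr3_marginalExtension hn3.ne' h⟩

/-- A Hermitian tripartite extension `ρ` with `tr_1(ρ) = σ2` and `tr_3(ρ) = σ1` exists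
if and only if the marginals of `σ1` and `σ2` on the middle system agree. -/
theorem stmt14 {n1 n2 n3 : ℕ} (hn1 : 0 < n1) (hn2 : 0 < n2) (hn3 : 0 < n3)
    (σ1 : Matrix (Fin n1 × Fin n2) (Fin n1 × Fin n2) ℂ) (hσ1 : σ1.IsHermitian)
    (σ2 : Matrix (Fin n2 × Fin n3) (Fin n2 × Fin n3) ℂ) (hσ2 : σ2.IsHermitian) :
    (∃ ρ : Matrix (Fin n1 × Fin n2 × Fin n3) (Fin n1 × Fin n2 × Fin n3) ℂ,
        ρ.IsHermitian ∧ ptr1 ρ = σ2 ∧ ptr3 ρ = σ1) ↔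
      btr1 σ1 = btr2 σ2 :=
  stmt14_general hn1 hn3 σ1 hσ1 σ2 hσ2
end

section
/- Let ρ1 ∈ D_{n1} and ρ2 ∈ D_{n2} be density matrices and let ρ ∈ S(ρ1,ρ2). Then rank(ρ1) ≤ rank(ρ)·rank(ρ2), rank(ρ2) ≤ rank(ρ)·rank(ρ1), and rank(ρ) ≤ rank(ρ1)·rank(ρ2). -/
/-!
Factor `ρ = W Wᴴ` and read `W` as a three-leg tensor `T i j k = W (i, j) k`. The matrices `ρ₁`,
`ρ₂` and `ρ` are `A Aᴴ` for the three flattenings `A` of `T`, so the three ranks are the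
flattening ranks of `T`, and each inequality is an instance of the flattening bound
`rank A₁ ≤ rank A₂ * rank A₃`. That bound holds because every slice `(j, k) ↦ T i j k` has its
columns in the column space of `A₃` and its rows in that of `A₂`, so all rows of `A₁` lie in the
tensor product of these two spaces.
-/

open Matrix Finset
open scoped ComplexOrder

open scoped Kronecker

section Flattening

variable {K : Type*} [Field K] {l m n : Type*}

def flattening (T : l → m → n → K) : Matrix l (m × n) K :=
  of fun i jk => T i jk.1 jk.2

lemma rank_flattening_swap [Fintype m] [Fintype n] (T : l → m → n → K) :
    (flattening fun i k j => T i j k).rank = (flattening T).rank :=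
  rank_submatrix (flattening T) (Equiv.refl l) (Equiv.prodComm n m)

lemma range_mulVecLin_submatrix_id_le [Fintype n] {n' : Type*} [Fintype n'] (A : Matrix m n K)
    (f : n' → n) : LinearMap.range (A.submatrix id f).mulVecLin ≤ LinearMap.range A.mulVecLin := by
  rw [range_mulVecLin, range_mulVecLin]
  exact Submodule.span_mono (Set.range_comp_subset_range f A.col)

lemma Submodule.exists_mul_mulVec_eq_self [Fintype m] [DecidableEq m] (V : Submodule K (m → K)) :
    ∃ (E : Matrix m (Fin (Module.finrank K V)) K) (L : Matrix (Fin (Module.finrank K V)) m K),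
      ∀ v ∈ V, (E * L) *ᵥ v = v := by
  obtain ⟨g, hg⟩ := V.subtype.exists_leftInverse_of_injective V.ker_subtype
  let e := (Module.finBasis K V).equivFun
  refine ⟨LinearMap.toMatrix' (V.subtype ∘ₗ e.symm.toLinearMap),
    LinearMap.toMatrix' (e.toLinearMap ∘ₗ g), fun v hv => ?_⟩
  rw [← LinearMap.toMatrix'_comp, LinearMap.toMatrix'_mulVec]
  simpa using congr(V.subtype ($hg ⟨v, hv⟩))

lemma mul_eq_self_of_range_le [Fintype m] [Fintype n] {V : Submodule K (m → K)}
    {P : Matrix m m K} (hP : ∀ v ∈ V, P *ᵥ v = v) {X : Matrix m n K}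
    (hX : LinearMap.range X.mulVecLin ≤ V) : P * X = X := by
  classical
  refine ext_of_mulVec_single fun j => ?_
  rw [← mulVec_mulVec]
  exact hP _ (hX ⟨_, rfl⟩)

theorem rank_flattening_le [Fintype l] [Fintype m] [Fintype n] (T : l → m → n → K) :
    (flattening T).rank ≤
      (flattening fun j i k => T i j k).rank * (flattening fun k i j => T i j k).rank := by
  classical
  obtain ⟨E₂, L₂, hP₂⟩ := Submodule.exists_mul_mulVec_eq_self
    (LinearMap.range (flattening fun j i k => T i j k).mulVecLin)
  obtain ⟨E₃, L₃, hP₃⟩ := Submodule.exists_mul_mulVec_eq_self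
    (LinearMap.range (flattening fun k i j => T i j k).mulVecLin)
  have hslice : ∀ i, vec (of fun k j => T i j k) =
      ((E₂ * L₂) ⊗ₖ (E₃ * L₃)) *ᵥ vec (of fun k j => T i j k) := by
    intro i
    set X : Matrix n m K := of fun k j => T i j k
    have hcol : E₃ * L₃ * X = X := mul_eq_self_of_range_le hP₃
      (range_mulVecLin_submatrix_id_le (flattening fun k i j => T i j k) (Prod.mk i))
    have hrow : E₂ * L₂ * Xᵀ = Xᵀ := mul_eq_self_of_range_le hP₂
      (range_mulVecLin_submatrix_id_le (flattening fun j i k => T i j k) (Prod.mk i))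
    have hrow' : X * (E₂ * L₂)ᵀ = X := by
      rw [← transpose_transpose (X * _), transpose_mul, transpose_transpose, hrow,
        transpose_transpose]
    rw [kronecker_mulVec_vec, hcol, hrow']
  have hfactor : (flattening T)ᵀ = (E₂ ⊗ₖ E₃) * ((L₂ ⊗ₖ L₃) * (flattening T)ᵀ) := by
    rw [← Matrix.mul_assoc, ← mul_kronecker_mul]
    ext ⟨j, k⟩ i
    exact congrFun (hslice i) (j, k)
  calc (flattening T).rank = (flattening T)ᵀ.rank := (rank_transpose _).symm
    _ ≤ (E₂ ⊗ₖ E₃).rank := hfactor ▸ rank_mul_le_left _ _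
    _ ≤ Fintype.card (Fin _ × Fin _) := rank_le_card_width _
    _ = _ := by simp [Matrix.rank]

end Flattening

section

open scoped MatrixOrder Matrix.Norms.L2Operator

theorem Matrix.PosSemidef.exists_eq_mul_conjTranspose {𝕜 n : Type*} [RCLike 𝕜] [Fintype n]
    [DecidableEq n] {A : Matrix n n 𝕜} (hA : A.PosSemidef) : ∃ W : Matrix n n 𝕜, A = W * Wᴴ :=
  CStarAlgebra.nonneg_iff_eq_mul_star_self.mp hA.nonneg

end

section PartialTrace

variable {n1 n2 : ℕ} {s : Type*} [Fintype s]

lemma trace2_mul_conjTranspose (W : Matrix (Fin n1 × Fin n2) s ℂ) :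
    trace2 (W * Wᴴ) =
      flattening (fun i j k => W (i, j) k) * (flattening fun i j k => W (i, j) k)ᴴ := by
  ext i i'
  simp [trace2, flattening, mul_apply, Fintype.sum_prod_type]

lemma trace1_mul_conjTranspose (W : Matrix (Fin n1 × Fin n2) s ℂ) :
    trace1 (W * Wᴴ) =
      flattening (fun j i k => W (i, j) k) * (flattening fun j i k => W (i, j) k)ᴴ := by
  ext j j'
  simp [trace1, flattening, mul_apply, Fintype.sum_prod_type]

end PartialTrace

theorem stmt16_general {n1 n2 : ℕ}
    (ρ1 : Matrix (Fin n1) (Fin n1) ℂ) (ρ2 : Matrix (Fin n2) (Fin n2) ℂ)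
    (ρ : Matrix (Fin n1 × Fin n2) (Fin n1 × Fin n2) ℂ)
    (hρ : ρ.PosSemidef)
    (h1 : trace2 ρ = ρ1) (h2 : trace1 ρ = ρ2) :
    ρ1.rank ≤ ρ.rank * ρ2.rank ∧ ρ2.rank ≤ ρ.rank * ρ1.rank ∧
      ρ.rank ≤ ρ1.rank * ρ2.rank := by
  obtain ⟨W, rfl⟩ := hρ.exists_eq_mul_conjTranspose
  set T : Fin n1 → Fin n2 → _ → ℂ := fun i j k => W (i, j) k
  have hr1 : ρ1.rank = (flattening T).rank := by
    rw [← h1, trace2_mul_conjTranspose, rank_self_mul_conjTranspose]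
  have hr2 : ρ2.rank = (flattening fun j i k => T i j k).rank := by
    rw [← h2, trace1_mul_conjTranspose, rank_self_mul_conjTranspose]
  have hr : (W * Wᴴ).rank = (flattening fun k i j => T i j k).rank := by
    rw [rank_self_mul_conjTranspose, ← rank_transpose]
    rfl -- `Wᵀ` is this flattening
  have h₂ := rank_flattening_le fun j i k => T i j k
  have h₃ := rank_flattening_le fun k i j => T i j k
  rw [rank_flattening_swap (fun k i j => T i j k)] at h₂
  rw [rank_flattening_swap T, rank_flattening_swap (fun j i k => T i j k)] at h₃
  rw [hr1, hr2, hr]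
  exact ⟨(rank_flattening_le T).trans_eq (mul_comm _ _), h₂.trans_eq (mul_comm _ _), h₃⟩

/-- Rank inequalities between a global state and its marginals. -/
theorem stmt16 {n1 n2 : ℕ}
    (ρ1 : Matrix (Fin n1) (Fin n1) ℂ) (ρ2 : Matrix (Fin n2) (Fin n2) ℂ)
    (hρ1 : ρ1.PosSemidef) (hρ1tr : ρ1.trace = 1)
    (hρ2 : ρ2.PosSemidef) (hρ2tr : ρ2.trace = 1)
    (ρ : Matrix (Fin n1 × Fin n2) (Fin n1 × Fin n2) ℂ)
    (hρ : ρ.PosSemidef) (hρtr : ρ.trace = 1)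
    (h1 : trace2 ρ = ρ1) (h2 : trace1 ρ = ρ2) :
    ρ1.rank ≤ ρ.rank * ρ2.rank ∧ ρ2.rank ≤ ρ.rank * ρ1.rank ∧
      ρ.rank ≤ ρ1.rank * ρ2.rank :=
  stmt16_general ρ1 ρ2 ρ hρ h1 h2
end
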